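/- Let G be a commutative topological group, let n, s ≥ 1, and let {h_{i,j}} (1 ≤ i ≤ n, 1 ≤ j ≤ s) be elements of G such that for every (i_1, …, i_s) ∈ {1, …, n}^s the set {h_{i_1,1}, …, h_{i_s,s}} topologically generates G. Suppose f : G → ℂ is continuous and satisfies Δ_{h_{n,k}} ⋯ Δ_{h_{2,k}} Δ_{h_{1,k}} f = 0 for every k = 1, …, s. Then f is a polynomial, i.e. there exists a nonnegative integer N such that Δ_{g_{N+1}} Δ_{g_N} ⋯ Δ_{g_1} f = 0 for all g_1, …, g_{N+1} ∈ G. -/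

import Mathlib

noncomputable section

/-- Forward difference operator: `Δ_h f x = f (x + h) - f x`. -/
def fwdDiffOp {G M : Type*} [AddCommGroup G] [AddCommGroup M] (h : G) (f : G → M) : G → M :=
  fun x => f (x + h) - f x

/-- Mixed differences along a list of steps; the head of the list is applied outermost,
so `mixedDiff [g_m, …, g_1] f = Δ_{g_m} ⋯ Δ_{g_1} f`. -/
def mixedDiff {G M : Type*} [AddCommGroup G] [AddCommGroup M] : List G → (G → M) → (G → M)
  | [], f => f
  | h :: t, f => fwdDiffOp h (mixedDiff t f)

/-- Translation operator: `τ_h f x = f (x + h)`. -/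
def transOp {G M : Type*} [AddCommGroup G] (h : G) (f : G → M) : G → M :=
  fun x => f (x + h)

/-- The span of all translates of `g`. -/
def tauSpan {G : Type*} [AddCommGroup G] (g : G → ℂ) : Submodule ℂ (G → ℂ) :=
  Submodule.span ℂ (Set.range fun h : G => transOp h g)

/-- `f` is an exponential polynomial iff the span of its translates is finite dimensional. -/
def IsExpPoly {G : Type*} [AddCommGroup G] (f : G → ℂ) : Prop :=
  FiniteDimensional ℂ (tauSpan f)

/-!
Induction on the total length of the columns `k ↦ [h 1 k, …, h n k]`. If some column is empty,
`f = 0`. Otherwise, for an entry `a` of column `k`, the differences commute, so `Δ_a f` satisfies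
the same hypotheses for the table with `a` removed from column `k`; by induction `Δ_a f` is a
polynomial. Picking one entry `a_k` in each column gives a common degree bound `N` for the
`Δ_{a_k} f`. The steps `c` for which `Δ_c f` has degree at most `N` are the common periods of all
`(N + 1)`-fold differences of `f`, hence a subgroup, closed since `f` is continuous. It contains
the `a_k`, which topologically generate `G`, so it is all of `G` and `f` has degree at most `N + 1`.
-/

section MixedDiff

variable {G M : Type*} [AddCommGroup G] [AddCommGroup M]

lemma fwdDiffOp_comm (a b : G) (f : G → M) :
    fwdDiffOp a (fwdDiffOp b f) = fwdDiffOp b (fwdDiffOp a f) := by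
  funext x
  simp only [fwdDiffOp, add_right_comm x b a]
  abel

lemma fwdDiffOp_eq_zero_iff_periodic {c : G} {f : G → M} :
    fwdDiffOp c f = 0 ↔ Function.Periodic f c := by
  simp only [funext_iff, fwdDiffOp, Pi.zero_apply, sub_eq_zero, Function.Periodic]

lemma fwdDiffOp_zero_right (a : G) : fwdDiffOp a (0 : G → M) = 0 := by
  funext x
  simp [fwdDiffOp]

lemma mixedDiff_zero (L : List G) : mixedDiff L (0 : G → M) = 0 := by
  induction L with
  | nil => rfl
  | cons a t ih => rw [mixedDiff, ih, fwdDiffOp_zero_right]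

lemma mixedDiff_fwdDiffOp (L : List G) (a : G) (f : G → M) :
    mixedDiff L (fwdDiffOp a f) = fwdDiffOp a (mixedDiff L f) := by
  induction L with
  | nil => rfl
  | cons b t ih => simp [mixedDiff, ih, fwdDiffOp_comm]

lemma mixedDiff_perm {L L' : List G} (hp : L.Perm L') (f : G → M) :
    mixedDiff L f = mixedDiff L' f := by
  induction hp with
  | nil => rfl
  | cons a _ ih => simp [mixedDiff, ih]
  | swap a b l => simp [mixedDiff, fwdDiffOp_comm]
  | trans _ _ ih₁ ih₂ => exact ih₁.trans ih₂

lemma mixedDiff_erase_fwdDiffOp [DecidableEq G] {L : List G} {a : G} (ha : a ∈ L) (f : G → M) :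
    mixedDiff (L.erase a) (fwdDiffOp a f) = mixedDiff L f := by
  rw [mixedDiff_fwdDiffOp, mixedDiff_perm (List.perm_cons_erase ha) f]
  rfl

lemma continuous_mixedDiff [TopologicalSpace G] [ContinuousAdd G] [TopologicalSpace M]
    [ContinuousSub M] (L : List G) {f : G → M} (hf : Continuous f) :
    Continuous (mixedDiff L f) := by
  induction L with
  | nil => exact hf
  | cons a t ih => exact (ih.comp (continuous_add_const a)).sub ih

end MixedDiff

section Periods

variable {G M : Type*} [AddCommGroup G]

def periodSubgroup (f : G → M) : AddSubgroup G where
  carrier := {c | Function.Periodic f c}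
  zero_mem' := fun x => by rw [add_zero]
  add_mem' := fun ha hb => ha.add_period hb
  neg_mem' := fun ha => ha.neg

lemma isClosed_periodSubgroup [TopologicalSpace G] [ContinuousAdd G] [TopologicalSpace M]
    [T2Space M] {f : G → M} (hf : Continuous f) : IsClosed (periodSubgroup f : Set G) := by
  have : (periodSubgroup f : Set G) = ⋂ x, {c | f (x + c) = f x} := by
    ext c
    simp [periodSubgroup, Function.Periodic]
  rw [this]
  exact isClosed_iInter fun x => isClosed_eq (hf.comp (continuous_const_add x)) continuous_const

end Periods

section PolyDeg

variable {G M : Type*} [AddCommGroup G] [AddCommGroup M]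

def IsPolyDegLE (N : ℕ) (f : G → M) : Prop :=
  ∀ L : List G, L.length = N + 1 → mixedDiff L f = 0

lemma isPolyDegLE_succ_iff {N : ℕ} {f : G → M} :
    IsPolyDegLE (N + 1) f ↔ ∀ c, IsPolyDegLE N (fwdDiffOp c f) := by
  constructor
  · intro hf c L hL
    rw [mixedDiff_fwdDiffOp]
    exact hf (c :: L) (by simp [hL])
  · rintro hf (_ | ⟨c, L⟩) hL
    · simp at hL
    · rw [mixedDiff, ← mixedDiff_fwdDiffOp]
      exact hf c L (by simpa using hL)

lemma IsPolyDegLE.succ {N : ℕ} {f : G → M} (hf : IsPolyDegLE N f) : IsPolyDegLE (N + 1) f :=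
  isPolyDegLE_succ_iff.2 fun c L hL => by rw [mixedDiff_fwdDiffOp, hf L hL, fwdDiffOp_zero_right]

lemma IsPolyDegLE.mono {N N' : ℕ} {f : G → M} (hf : IsPolyDegLE N f) (hN : N ≤ N') :
    IsPolyDegLE N' f :=
  Nat.le_induction hf (fun _ _ ih => ih.succ) N' hN

lemma exists_isPolyDegLE_forall {ι : Type*} [Finite ι] {F : ι → G → M}
    (hF : ∀ i, ∃ N, IsPolyDegLE N (F i)) : ∃ N, ∀ i, IsPolyDegLE N (F i) := by
  have := Fintype.ofFinite ι
  choose N hN using hF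
  exact ⟨Finset.univ.sup N, fun i => (hN i).mono (Finset.le_sup (Finset.mem_univ i))⟩

def polyDiffSubgroup (N : ℕ) (f : G → M) : AddSubgroup G :=
  ⨅ L : {L : List G // L.length = N + 1}, periodSubgroup (mixedDiff L.1 f)

lemma mem_polyDiffSubgroup {N : ℕ} {f : G → M} {c : G} :
    c ∈ polyDiffSubgroup N f ↔ IsPolyDegLE N (fwdDiffOp c f) := by
  simp only [polyDiffSubgroup, AddSubgroup.mem_iInf, Subtype.forall, IsPolyDegLE,
    mixedDiff_fwdDiffOp, fwdDiffOp_eq_zero_iff_periodic]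
  rfl

lemma isClosed_polyDiffSubgroup [TopologicalSpace G] [ContinuousAdd G] [TopologicalSpace M]
    [IsTopologicalAddGroup M] [T2Space M] (N : ℕ) {f : G → M} (hf : Continuous f) :
    IsClosed (polyDiffSubgroup N f : Set G) := by
  rw [polyDiffSubgroup, AddSubgroup.coe_iInf]
  exact isClosed_iInter fun L => isClosed_periodSubgroup (continuous_mixedDiff L.1 hf)

lemma isPolyDegLE_succ_of_dense [TopologicalSpace G] [ContinuousAdd G] [TopologicalSpace M]
    [IsTopologicalAddGroup M] [T2Space M] {N : ℕ} {f : G → M} (hf : Continuous f) {S : Set G}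
    (hS : Dense (AddSubgroup.closure S : Set G)) (hSf : ∀ a ∈ S, IsPolyDegLE N (fwdDiffOp a f)) :
    IsPolyDegLE (N + 1) f := by
  have hle : AddSubgroup.closure S ≤ polyDiffSubgroup N f :=
    (AddSubgroup.closure_le _).2 fun a ha => mem_polyDiffSubgroup.2 (hSf a ha)
  refine isPolyDegLE_succ_iff.2 fun c => mem_polyDiffSubgroup.1 ?_
  exact (isClosed_polyDiffSubgroup N hf).closure_subset_iff.2 hle (hS.closure_eq ▸ Set.mem_univ c)

end PolyDeg

lemma sum_length_update_erase_lt {ι G : Type*} [Fintype ι] [DecidableEq ι] [DecidableEq G]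
    (cols : ι → List G) {k : ι} {a : G} (ha : a ∈ cols k) :
    ∑ j, (Function.update cols k ((cols k).erase a) j).length < ∑ j, (cols j).length := by
  refine Finset.sum_lt_sum (fun j _ => ?_) ⟨k, Finset.mem_univ k, ?_⟩
  · rcases eq_or_ne j k with rfl | hj
    · simpa using (List.erase_sublist (l := cols j) (a := a)).length_le
    · simp [hj]
  · simp [List.length_erase_of_mem ha, List.length_pos_of_mem ha]

theorem exists_isPolyDegLE_of_mixedDiff_columns {ι G M : Type*} [Fintype ι] [AddCommGroup G]
    [TopologicalSpace G] [ContinuousAdd G] [AddCommGroup M] [TopologicalSpace M]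
    [IsTopologicalAddGroup M] [T2Space M] (cols : ι → List G)
    (hgen : ∀ sel : ι → G, (∀ k, sel k ∈ cols k) →
      Dense (AddSubgroup.closure (Set.range sel) : Set G))
    {f : G → M} (hf : Continuous f) (hcols : ∀ k, mixedDiff (cols k) f = 0) :
    ∃ N, IsPolyDegLE N f := by
  classical
  by_cases hempty : ∃ k, cols k = []
  · obtain ⟨k, hk⟩ := hempty
    have hf0 : f = 0 := by simpa [hk, mixedDiff] using hcols k
    exact ⟨0, fun L _ => by rw [hf0, mixedDiff_zero]⟩
  have hne k : cols k ≠ [] := fun hk => hempty ⟨k, hk⟩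
  have hstep : ∀ k, ∀ a ∈ cols k, ∃ N, IsPolyDegLE N (fwdDiffOp a f) := by
    intro k a ha
    refine exists_isPolyDegLE_of_mixedDiff_columns (Function.update cols k ((cols k).erase a))
      (fun sel hsel => hgen sel fun j => ?_) ((hf.comp (continuous_add_const a)).sub hf)
      (fun j => ?_)
    · rcases eq_or_ne j k with rfl | hj
      · exact List.mem_of_mem_erase (by simpa using hsel j)
      · simpa [hj] using hsel j
    · rcases eq_or_ne j k with rfl | hj
      · simpa using (mixedDiff_erase_fwdDiffOp ha f).trans (hcols j)
      · rw [Function.update_of_ne hj, mixedDiff_fwdDiffOp, hcols j, fwdDiffOp_zero_right]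
  let sel k := (cols k).head (hne k)
  have hsel k : sel k ∈ cols k := List.head_mem _
  obtain ⟨N, hN⟩ := exists_isPolyDegLE_forall fun k => hstep k (sel k) (hsel k)
  exact ⟨N + 1, isPolyDegLE_succ_of_dense hf (hgen sel hsel) (by rintro _ ⟨k, rfl⟩; exact hN k)⟩
termination_by ∑ k, (cols k).length
decreasing_by convert sum_length_update_erase_lt cols ha

theorem montel_mixed_topological_polynomial_general {G : Type*} [AddCommGroup G] [TopologicalSpace G]
    [IsTopologicalAddGroup G] {n s : ℕ}
    (h : Fin n → Fin s → G)
    (hgen : ∀ idx : Fin s → Fin n,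
      closure ((AddSubgroup.closure (Set.range fun j : Fin s => h (idx j) j) :
        AddSubgroup G) : Set G) = Set.univ)
    (f : G → ℂ) (hcont : Continuous f)
    (hf : ∀ k : Fin s, mixedDiff (List.ofFn fun i : Fin n => h i k).reverse f = 0) :
    ∃ N : ℕ, ∀ g : Fin (N + 1) → G, mixedDiff (List.ofFn g).reverse f = 0 := by
  have hdense (sel : Fin s → G) (hsel : ∀ k, sel k ∈ (List.ofFn fun i : Fin n => h i k).reverse) :
      Dense (AddSubgroup.closure (Set.range sel) : Set G) := by
    choose idx hidx using fun k => List.mem_ofFn.mp (List.mem_reverse.mp (hsel k))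
    rw [← funext hidx, dense_iff_closure_eq]
    exact hgen idx
  obtain ⟨N, hN⟩ := exists_isPolyDegLE_of_mixedDiff_columns _ hdense hcont hf
  exact ⟨N, fun g => hN _ (by simp)⟩

/-- **Montel-type theorem for mixed differences, topological polynomial case.**
If for every choice `(i_1, …, i_s) ∈ {1, …, n}^s` the set `{h i_1 1, …, h i_s s}` topologically
generates the commutative topological group `G`, `f` is continuous and
`Δ_{h n k} ⋯ Δ_{h 1 k} f = 0` for each `k`, then `f` is a polynomial: there is `N` with
`Δ_{g_{N+1}} ⋯ Δ_{g_1} f = 0` for all `g_1, …, g_{N+1}`. -/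
theorem montel_mixed_topological_polynomial {G : Type*} [AddCommGroup G] [TopologicalSpace G]
    [IsTopologicalAddGroup G] {n s : ℕ} (hn : 1 ≤ n) (hs : 1 ≤ s)
    (h : Fin n → Fin s → G)
    (hgen : ∀ idx : Fin s → Fin n,
      closure ((AddSubgroup.closure (Set.range fun j : Fin s => h (idx j) j) :
        AddSubgroup G) : Set G) = Set.univ)
    (f : G → ℂ) (hcont : Continuous f)
    (hf : ∀ k : Fin s, mixedDiff (List.ofFn fun i : Fin n => h i k).reverse f = 0) :
    ∃ N : ℕ, ∀ g : Fin (N + 1) → G, mixedDiff (List.ofFn g).reverse f = 0 :=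
  montel_mixed_topological_polynomial_general h hgen f hcont hf
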